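/- arXiv:2006.13102 — 5 statements merged into one kernel-verified Lean document; each statement's English description precedes it below -/
import Mathlib

section
/- Let f ∈ 𝒮(S^m) be a symmetric m-tensor field on ℝⁿ with Schwartz components and let q ≥ 0 be an integer. Then for every (y,ξ) ∈ T𝕊^{n−1} the Fourier transform over T𝕊^{n−1} of the q-th integral moment transform satisfies \widehat{I^q f}(y,ξ) = (2π)^{1/2} i^q ⟨ξ,∂_y⟩^q ⟨f̂(y), ξ^m⟩, where ⟨f̂(y), ξ^m⟩ = f̂_{i₁…i_m}(y) ξ^{i₁}⋯ξ^{i_m} (componentwise Fourier transform of f) and ⟨ξ,∂_y⟩ = Σ_j ξ^j ∂/∂y^j. In particular \widehat{I^0 f}(y,ξ) = (2π)^{1/2} ⟨f̂(y), ξ^m⟩. -/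
noncomputable section

open MeasureTheory Filter
open scoped RealInnerProductSpace BigOperators

/-- `ℝⁿ` with the Euclidean structure. -/
abbrev En (n : ℕ) := EuclideanSpace ℝ (Fin n)

/-- A symmetric `m`-tensor on `ℝⁿ` (pointwise): a family of reals indexed by
`(i₁,…,i_m)`, invariant under permutations of the indices. -/
def IsSymTensor {n m : ℕ} (F : (Fin m → Fin n) → ℝ) : Prop :=
  ∀ (π : Equiv.Perm (Fin m)) (i : Fin m → Fin n), F (i ∘ π) = F i

/-- A symmetric `m`-tensor field on `ℝⁿ`. -/
def IsSymField {n m : ℕ} (f : (Fin m → Fin n) → En n → ℝ) : Prop :=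
  ∀ (π : Equiv.Perm (Fin m)) (i : Fin m → Fin n), f (i ∘ π) = f i

/-- All components of the field are Schwartz functions. -/
def IsSchwartzField {n m : ℕ} (f : (Fin m → Fin n) → En n → ℝ) : Prop :=
  ∀ i, ∃ φ : SchwartzMap (En n) ℝ, ⇑φ = f i

/-- Symmetrization `σ` of a tensor: average over all permutations of the indices. -/
def symz {n m : ℕ} {α : Type*} [AddCommMonoid α] [Module ℝ α]
    (F : (Fin m → Fin n) → α) : (Fin m → Fin n) → α :=
  fun i => ((m.factorial : ℝ))⁻¹ • ∑ π : Equiv.Perm (Fin m), F (i ∘ π)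

/-- The `q`-th momentum ray transform
`(J^q f)(x,ξ) = ∫ t^q f_{i₁…i_m}(x+tξ) ξ^{i₁}⋯ξ^{i_m} dt`, as a function on all of
`ℝⁿ × ℝⁿ`; its restriction to `TSⁿ⁻¹ = {|ξ|=1, ⟨x,ξ⟩=0}` is `I^q f`. -/
def momRT {n m : ℕ} (q : ℕ) (f : (Fin m → Fin n) → En n → ℝ) (x ξ : En n) : ℝ :=
  ∫ t : ℝ, t ^ q * ∑ i : Fin m → Fin n, f i (x + t • ξ) * ∏ r, ξ (i r)

/-- Coordinate partial derivative `∂/∂x^j`. -/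
def pd {n : ℕ} (j : Fin n) (u : En n → ℝ) : En n → ℝ :=
  fun x => fderiv ℝ u x (EuclideanSpace.single j 1)

/-- Inner differentiation (symmetrized derivative) `d`. -/
def dsym {n m : ℕ} (u : (Fin m → Fin n) → En n → ℝ) :
    (Fin (m + 1) → Fin n) → En n → ℝ :=
  symz (fun i => pd (i (Fin.last m)) (u (fun s => i s.castSucc)))

/-- Iterated inner differentiation `d^k`. -/
def dpow {n m : ℕ} : (k : ℕ) → ((Fin m → Fin n) → En n → ℝ) →
    (Fin (m + k) → Fin n) → En n → ℝ
  | 0, u => u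
  | k + 1, u => dsym (dpow k u)

/-- Divergence `δ`. -/
def divg {n m : ℕ} (u : (Fin (m + 1) → Fin n) → En n → ℝ) :
    (Fin m → Fin n) → En n → ℝ :=
  fun i x => ∑ j : Fin n, pd j (u (Fin.snoc i j)) x

/-- Iterated divergence `δ^k`. -/
def divpow {n : ℕ} : (k : ℕ) → {p : ℕ} → ((Fin (p + k) → Fin n) → En n → ℝ) →
    (Fin p → Fin n) → En n → ℝ
  | 0, _, u => u
  | k + 1, _, u => divpow k (divg u)

/-- Partial derivative `∂/∂x^j` in the first slot of a function of `(x, ξ)`. -/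
def pdx {n : ℕ} (j : Fin n) (F : En n → En n → ℝ) : En n → En n → ℝ :=
  fun x ξ => fderiv ℝ (fun x' => F x' ξ) x (EuclideanSpace.single j 1)

/-- Partial derivative `∂/∂ξ^j` in the second slot of a function of `(x, ξ)`. -/
def pdxi {n : ℕ} (j : Fin n) (F : En n → En n → ℝ) : En n → En n → ℝ :=
  fun x ξ => fderiv ℝ (fun ξ' => F x ξ') ξ (EuclideanSpace.single j 1)

/-- Iterated `∂x` derivatives along a list of indices. -/
def pdxList {n : ℕ} (l : List (Fin n)) (F : En n → En n → ℝ) : En n → En n → ℝ :=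
  l.foldr pdx F

/-- Iterated `∂ξ` derivatives along a list of indices. -/
def pdxiList {n : ℕ} (l : List (Fin n)) (F : En n → En n → ℝ) : En n → En n → ℝ :=
  l.foldr pdxi F

/-- The John operator `J_{ij} = ∂²/∂x^i∂ξ^j − ∂²/∂x^j∂ξ^i`. -/
def johnOp {n : ℕ} (i j : Fin n) (F : En n → En n → ℝ) : En n → En n → ℝ :=
  fun x ξ => pdx i (pdxi j F) x ξ - pdx j (pdxi i F) x ξ

/-- Iterated John operators `J_{i₁j₁} ⋯ J_{i_r j_r}`. -/
def johnIter {n : ℕ} (l : List (Fin n × Fin n)) (F : En n → En n → ℝ) : En n → En n → ℝ :=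
  l.foldr (fun ij G => johnOp ij.1 ij.2 G) F

/-- Sharafutdinov's Schwartz space `𝒮(TSⁿ⁻¹)`: a function on
`TSⁿ⁻¹ = {(x,ξ) : |ξ|=1, ⟨x,ξ⟩=0}` is Schwartz iff it is the restriction of a
Schwartz function on `ℝⁿ × ℝⁿ`. -/
def IsSchwartzOnTS {n : ℕ} (φ : En n → En n → ℝ) : Prop :=
  ∃ Φ : SchwartzMap (En n × En n) ℝ, ∀ x ξ : En n, ‖ξ‖ = 1 → ⟪x, ξ⟫ = 0 → φ x ξ = Φ (x, ξ)

/-- Symmetric multiplication `i_{x^{⊗k}} : S^m → S^{m+k}`. -/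
def iPowTens {n m k : ℕ} (x : En n) (V : (Fin m → Fin n) → ℝ) :
    (Fin (m + k) → Fin n) → ℝ :=
  symz (fun i => (∏ r : Fin k, x (i (Fin.natAdd m r))) * V (fun s => i (Fin.castAdd k s)))

/-- Convolution (contraction) `j_{x^{⊗k}} : S^{m+k} → S^m`. -/
def jPowTens {n m k : ℕ} (x : En n) (F : (Fin (m + k) → Fin n) → ℝ) :
    (Fin m → Fin n) → ℝ :=
  fun i => ∑ j : Fin k → Fin n, (∏ r, x (j r)) * F (Fin.append i j)

/-- Fourier transform over `TSⁿ⁻¹`: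
`φ̂(y,ξ) = (2π)^{−(n−1)/2} ∫_{ξ^⊥} e^{−i⟨x,y⟩} φ(x,ξ) dx`,
the integral being over the hyperplane `ξ^⊥` with its `(n−1)`-dimensional
Lebesgue measure. -/
def ftrTS {n : ℕ} (φ : En n → En n → ℝ) (y ξ : En n) : ℂ :=
  (((2 * Real.pi) ^ (-((n : ℝ) - 1) / 2) : ℝ) : ℂ) *
    ∫ x : (ℝ ∙ ξ)ᗮ, Complex.exp (-Complex.I * (⟪(x : En n), y⟫ : ℝ)) * (φ x ξ : ℂ)

/-- Componentwise Fourier transform with the convention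
`(2π)^{-n/2} ∫ e^{-i⟨x,y⟩} u(x) dx`. -/
def ftr {n : ℕ} (u : En n → ℝ) (y : En n) : ℂ :=
  (((2 * Real.pi) ^ (-(n : ℝ) / 2) : ℝ) : ℂ) *
    ∫ x : En n, Complex.exp (-Complex.I * (⟪x, y⟫ : ℝ)) * (u x : ℂ)

/-- Directional derivative `⟨ξ, ∂_y⟩` of a complex function. -/
def dirD {n : ℕ} (ξ : En n) (u : En n → ℂ) : En n → ℂ :=
  fun y => fderiv ℝ u y ξ


/-!
Put `Φ = ⟨f, ξ^m⟩`, a Schwartz function. The right-hand side is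
`(2π)^{1/2} i^q ⟨ξ,∂_y⟩^q Φ̂(y)`, and differentiating under the integral sign turns each
`⟨ξ,∂_y⟩` into multiplication of the integrand by `-i⟨z,ξ⟩`; as `i^q (-i)^q = 1`, it equals
`(2π)^{1/2} (2π)^{-n/2} ∫ e^{-i⟨z,y⟩} ⟨z,ξ⟩^q Φ(z) dz`.
The isometry `ξ^⊥ × ℝ ≃ ℝⁿ, (x,t) ↦ x + tξ` preserves volume; since `y ⊥ ξ`, the phase does not
depend on `t`, and Fubini turns the integral into the Fourier transform over `ξ^⊥` of
`x ↦ ∫ t^q Φ(x+tξ) dt = I^q f(x,ξ)`.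
-/

open Complex

section InnerProductSpace

variable {E : Type*} [NormedAddCommGroup E] [InnerProductSpace ℝ E]

theorem norm_inner_pow_mul_le (z ξ : E) (k : ℕ) (w : ℂ) :
    ‖(-I * (⟪z, ξ⟫ : ℝ)) ^ k * w‖ ≤ ‖ξ‖ ^ k * (‖z‖ ^ k * ‖w‖) := by
  rw [norm_mul, norm_pow, norm_mul, norm_neg, norm_I, one_mul, norm_real, Real.norm_eq_abs,
    ← mul_assoc, ← mul_pow, mul_comm ‖ξ‖]
  gcongr
  exact abs_real_inner_le_norm z ξ

theorem inner_add_smul_self_of_mem_orthogonal {ξ : E} (hξ : ‖ξ‖ = 1) {x : E} (hx : x ∈ (ℝ ∙ ξ)ᗮ)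
    (t : ℝ) : ⟪x + t • ξ, ξ⟫ = t := by
  rw [inner_add_left, real_inner_smul_left, real_inner_self_eq_norm_sq, hξ, real_inner_comm,
    Submodule.mem_orthogonal_singleton_iff_inner_right.1 hx]
  ring

theorem norm_add_smul_sq_of_mem_orthogonal {ξ : E} (hξ : ‖ξ‖ = 1) {x : E} (hx : x ∈ (ℝ ∙ ξ)ᗮ)
    (t : ℝ) : ‖x + t • ξ‖ ^ 2 = ‖x‖ ^ 2 + ‖t‖ ^ 2 := by
  have hxξ : ⟪x, t • ξ⟫ = 0 := by
    rw [real_inner_smul_right, real_inner_comm,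
      Submodule.mem_orthogonal_singleton_iff_inner_right.1 hx, mul_zero]
  rw [sq, sq, sq, norm_add_sq_eq_norm_sq_add_norm_sq_of_inner_eq_zero x _ hxξ, norm_smul, hξ,
    mul_one]

def orthogonalLineIsometry {ξ : E} (hξ : ‖ξ‖ = 1) : WithLp 2 ((ℝ ∙ ξ)ᗮ × ℝ) ≃ₗᵢ[ℝ] E :=
  LinearIsometryEquiv.ofSurjective
    { toLinearMap := ((ℝ ∙ ξ)ᗮ.subtype.coprod (LinearMap.toSpanSingleton ℝ E ξ)) ∘ₗ
        (WithLp.linearEquiv 2 ℝ ((ℝ ∙ ξ)ᗮ × ℝ)).toLinearMap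
      norm_map' := fun p => by
        rw [← sq_eq_sq₀ (norm_nonneg _) (norm_nonneg _), WithLp.prod_norm_sq_eq_of_L2]
        exact norm_add_smul_sq_of_mem_orthogonal hξ p.fst.2 p.snd }
    (fun z => by
      have hz : z - ⟪ξ, z⟫ • ξ ∈ (ℝ ∙ ξ)ᗮ := by
        rw [Submodule.mem_orthogonal_singleton_iff_inner_right, inner_sub_right,
          real_inner_smul_right, real_inner_self_eq_norm_sq, hξ]
        ring
      exact ⟨WithLp.toLp 2 (⟨_, hz⟩, ⟪ξ, z⟫), by simp⟩)

variable [MeasurableSpace E]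

theorem integral_eq_integral_orthogonal_line [FiniteDimensional ℝ E] [BorelSpace E]
    {F : Type*} [NormedAddCommGroup F] [NormedSpace ℝ F] {ξ : E} (hξ : ‖ξ‖ = 1) {g : E → F}
    (hg : Integrable g) :
    ∫ z, g z = ∫ x : (ℝ ∙ ξ)ᗮ, ∫ t : ℝ, g (x + t • ξ) := by
  let T : (ℝ ∙ ξ)ᗮ × ℝ ≃ᵐ E :=
    (MeasurableEquiv.toLp 2 _).trans (orthogonalLineIsometry hξ).toMeasurableEquiv
  have hT : MeasurePreserving T :=
    (WithLp.volume_preserving_toLp _ _).trans (orthogonalLineIsometry hξ).measurePreserving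
  rw [← hT.integral_comp' g, Measure.volume_eq_prod, integral_prod]
  · rfl
  · rw [← Measure.volume_eq_prod]
    exact (hT.integrable_comp_emb T.measurableEmbedding).2 hg

def fourierIntegralExp (μ : Measure E) (g : E → ℂ) (y : E) : ℂ :=
  ∫ z, cexp (-I * (⟪z, y⟫ : ℝ)) * g z ∂μ

variable {μ : Measure E}

open scoped FourierTransform in
theorem fourierIntegralExp_eq_fourierIntegral (g : E → ℂ) :
    fourierIntegralExp μ g = VectorFourier.fourierIntegral 𝐞 μ
      ((2 * Real.pi)⁻¹ • innerSL ℝ : E →L[ℝ] E →L[ℝ] ℝ).toLinearMap₁₂ g := by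
  ext y
  simp only [fourierIntegralExp, VectorFourier.fourierIntegral, Circle.smul_def,
    Real.fourierChar_apply, smul_eq_mul, ContinuousLinearMap.toLinearMap₁₂_apply_apply_apply,
    smul_apply, innerSL_apply_apply]
  congr 1 with z
  congr 2
  push_cast
  field_simp

theorem fderiv_fourierIntegralExp_apply [BorelSpace E] [SecondCountableTopology E] {g : E → ℂ}
    (hg : Integrable g μ) (hg' : Integrable (fun z => ‖z‖ * ‖g z‖) μ) (y v : E) :
    fderiv ℝ (fourierIntegralExp μ g) y v
      = fourierIntegralExp μ (fun z => -I * (⟪z, v⟫ : ℝ) * g z) y := by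
  set L : E →L[ℝ] E →L[ℝ] ℝ := (2 * Real.pi)⁻¹ • innerSL ℝ
  have hLg : Integrable (VectorFourier.fourierSMulRight L g) μ :=
    (hg'.const_mul (2 * Real.pi * ‖L‖)).mono' hg.1.fourierSMulRight
      (ae_of_all _ fun z => (VectorFourier.norm_fourierSMulRight_le L g z).trans_eq (by ring))
  rw [fourierIntegralExp_eq_fourierIntegral, fourierIntegralExp_eq_fourierIntegral,
    VectorFourier.fderiv_fourierIntegral L hg hg',
    Real.fourierIntegral_continuousLinearMap_apply' hLg]
  congr 1 with z
  simp only [VectorFourier.fourierSMulRight_apply, L, smul_apply, smul_eq_mul, real_smul]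
  push_cast
  field_simp
  rw [innerSL_apply_apply, mul_comm]

theorem integrable_exp_inner_mul [OpensMeasurableSpace E] {g : E → ℂ} (hg : Integrable g μ)
    (y : E) : Integrable (fun z => cexp (-I * (⟪z, y⟫ : ℝ)) * g z) μ :=
  hg.bdd_mul (c := 1) (by fun_prop : Continuous _).aestronglyMeasurable
    (ae_of_all _ fun z => by rw [norm_exp]; simp)

theorem integrable_inner_pow_mul [OpensMeasurableSpace E] {g : E → ℂ}
    (hg_meas : AEStronglyMeasurable g μ) {k : ℕ}
    (hg : Integrable (fun z => ‖z‖ ^ k * ‖g z‖) μ) (ξ : E) :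
    Integrable (fun z => (-I * (⟪z, ξ⟫ : ℝ)) ^ k * g z) μ :=
  (hg.const_mul (‖ξ‖ ^ k)).mono' ((by fun_prop : Continuous _).aestronglyMeasurable.mul hg_meas)
    (ae_of_all _ fun z => norm_inner_pow_mul_le z ξ k (g z))

theorem integrable_pow_mul_norm_inner_mul [OpensMeasurableSpace E] {g : E → ℂ}
    (hg_meas : AEStronglyMeasurable g μ) {j : ℕ}
    (hg : Integrable (fun z => ‖z‖ ^ (j + 1) * ‖g z‖) μ) (ξ : E) :
    Integrable (fun z => ‖z‖ ^ j * ‖-I * (⟪z, ξ⟫ : ℝ) * g z‖) μ := by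
  refine (hg.const_mul ‖ξ‖).mono' (by fun_prop) (ae_of_all _ fun z => ?_)
  have h := norm_inner_pow_mul_le z ξ 1 (g z)
  rw [pow_one, pow_one, pow_one] at h
  rw [norm_mul, norm_norm, norm_pow, norm_norm]
  calc ‖z‖ ^ j * ‖-I * (⟪z, ξ⟫ : ℝ) * g z‖ ≤ ‖z‖ ^ j * (‖ξ‖ * (‖z‖ * ‖g z‖)) := by gcongr
    _ = ‖ξ‖ * (‖z‖ ^ (j + 1) * ‖g z‖) := by ring

theorem fourierIntegralExp_inner_pow_mul_eq_integral_orthogonal [FiniteDimensional ℝ E]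
    [BorelSpace E] {ξ y : E} (hξ : ‖ξ‖ = 1) (hyξ : ⟪y, ξ⟫ = 0) {g : E → ℂ}
    (hg_meas : AEStronglyMeasurable g) {q : ℕ} (hg : Integrable (fun z => ‖z‖ ^ q * ‖g z‖)) :
    fourierIntegralExp volume (fun z => (-I * (⟪z, ξ⟫ : ℝ)) ^ q * g z) y
      = (-I) ^ q * ∫ x : (ℝ ∙ ξ)ᗮ,
          cexp (-I * (⟪(x : E), y⟫ : ℝ)) * ∫ t : ℝ, (t : ℂ) ^ q * g (x + t • ξ) := by
  rw [fourierIntegralExp, integral_eq_integral_orthogonal_line hξ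
    (integrable_exp_inner_mul (integrable_inner_pow_mul hg_meas hg ξ) y), ← integral_const_mul]
  congr 1 with x
  rw [← integral_const_mul, ← integral_const_mul]
  congr 1 with t
  rw [inner_add_smul_self_of_mem_orthogonal hξ x.2, inner_add_left, real_inner_smul_left,
    ← real_inner_comm ξ y, hyξ, mul_zero, add_zero]
  ring

end InnerProductSpace

theorem SchwartzMap.integrable_pow_mul_norm_ofReal {D : Type*} [NormedAddCommGroup D]
    [NormedSpace ℝ D] [MeasurableSpace D] [BorelSpace D] [SecondCountableTopology D]
    (μ : Measure D) [μ.HasTemperateGrowth] (Φ : SchwartzMap D ℝ) (k : ℕ) :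
    Integrable (fun z => ‖z‖ ^ k * ‖(Φ z : ℂ)‖) μ := by
  simpa [norm_real] using Φ.integrable_pow_mul μ k

section Euclidean

variable {n m : ℕ}

theorem iterate_dirD_fourierIntegralExp (ξ : En n) {μ : Measure (En n)} {g : En n → ℂ}
    (hg_meas : AEStronglyMeasurable g μ) (hg : ∀ k, Integrable (fun z => ‖z‖ ^ k * ‖g z‖) μ)
    (k : ℕ) :
    (dirD ξ)^[k] (fourierIntegralExp μ g)
      = fourierIntegralExp μ (fun z => (-I * (⟪z, ξ⟫ : ℝ)) ^ k * g z) := by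
  induction k generalizing g with
  | zero => simp
  | succ k ih =>
    have hstep : dirD ξ (fourierIntegralExp μ g)
        = fourierIntegralExp μ (fun z => -I * (⟪z, ξ⟫ : ℝ) * g z) :=
      funext fun y => fderiv_fourierIntegralExp_apply
        (by simpa using integrable_inner_pow_mul hg_meas (hg 0) ξ) (by simpa using hg 1) y ξ
    rw [Function.iterate_succ_apply, hstep,
      ih (by fun_prop) fun j => integrable_pow_mul_norm_inner_mul hg_meas (hg (j + 1)) ξ]
    simp only [pow_succ, mul_assoc]

theorem ftr_eq_fourierIntegralExp (u : En n → ℝ) :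
    ftr u = fourierIntegralExp volume
      (fun z => (((2 * Real.pi) ^ (-(n : ℝ) / 2) * u z : ℝ) : ℂ)) := by
  ext y
  rw [ftr, fourierIntegralExp, ← integral_const_mul]
  congr 1 with z
  push_cast
  ring

theorem iterate_dirD_ftr (Φ : SchwartzMap (En n) ℝ) (ξ : En n) (k : ℕ) :
    (dirD ξ)^[k] (ftr Φ) = fourierIntegralExp volume
      (fun z => (-I * (⟪z, ξ⟫ : ℝ)) ^ k * (((2 * Real.pi) ^ (-(n : ℝ) / 2) * Φ z : ℝ) : ℂ)) := by
  rw [ftr_eq_fourierIntegralExp]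
  exact iterate_dirD_fourierIntegralExp ξ (by fun_prop)
    (((2 * Real.pi) ^ (-(n : ℝ) / 2) • Φ).integrable_pow_mul_norm_ofReal volume) k

/-- The contraction `⟨f(z), ξ^m⟩ = f_{i₁…i_m}(z) ξ^{i₁}⋯ξ^{i_m}`. -/
def contractPow (f : (Fin m → Fin n) → En n → ℝ) (ξ z : En n) : ℝ :=
  ∑ i, f i z * ∏ r, ξ (i r)

theorem IsSchwartzField.integrable {f : (Fin m → Fin n) → En n → ℝ} (hf : IsSchwartzField f)
    (i : Fin m → Fin n) : Integrable (f i) := by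
  obtain ⟨φ, hφ⟩ := hf i
  exact hφ ▸ φ.integrable

theorem IsSchwartzField.exists_schwartzMap_contractPow {f : (Fin m → Fin n) → En n → ℝ}
    (hf : IsSchwartzField f) (ξ : En n) :
    ∃ Φ : SchwartzMap (En n) ℝ, ⇑Φ = contractPow f ξ := by
  choose φ hφ using hf
  refine ⟨∑ i, (∏ r, ξ (i r)) • φ i, funext fun z => ?_⟩
  simp [contractPow, ← hφ, mul_comm]

theorem sum_ftr_mul_prod_eq_ftr_contractPow {f : (Fin m → Fin n) → En n → ℝ}
    (hf : ∀ i, Integrable (f i)) (ξ : En n) :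
    (fun y => ∑ i, ftr (f i) y * ∏ r, (ξ (i r) : ℂ)) = ftr (contractPow f ξ) := by
  funext y
  simp only [ftr, contractPow, ofReal_sum, ofReal_mul, ofReal_prod, Finset.mul_sum, mul_assoc]
  rw [integral_finsetSum, Finset.mul_sum]
  · refine Finset.sum_congr rfl fun i _ => ?_
    rw [← integral_mul_const]
    congr 2 with z
    ring
  · exact fun i _ => integrable_exp_inner_mul ((hf i).ofReal.mul_const _) y

theorem momRT_eq_integral_contractPow (q : ℕ) (f : (Fin m → Fin n) → En n → ℝ) (x ξ : En n) :
    momRT q f x ξ = ∫ t : ℝ, t ^ q * contractPow f ξ (x + t • ξ) := rfl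

end Euclidean

theorem fourier_transform_of_momentum_ray_transform_general
    (n m q : ℕ)
    (f : (Fin m → Fin n) → En n → ℝ)
    (hf : IsSchwartzField f) :
    ∀ y ξ : En n, ‖ξ‖ = 1 → ⟪y, ξ⟫ = 0 →
      ftrTS (momRT q f) y ξ
        = ((Real.sqrt (2 * Real.pi) : ℝ) : ℂ) * Complex.I ^ q *
          ((dirD ξ)^[q]
            (fun y' => ∑ i : Fin m → Fin n, ftr (f i) y' * ∏ r, (ξ (i r) : ℂ)) y) := by
  intro y ξ hξ hyξ
  obtain ⟨Φ, hΦ⟩ := hf.exists_schwartzMap_contractPow ξ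
  set c : ℝ := (2 * Real.pi) ^ (-(n : ℝ) / 2)
  have hline (x : En n) :
      ∫ t : ℝ, (t : ℂ) ^ q * ((c * Φ (x + t • ξ) : ℝ) : ℂ) = c * (momRT q f x ξ : ℂ) := by
    rw [momRT_eq_integral_contractPow, ← hΦ, ← integral_complex_ofReal, ← integral_const_mul]
    push_cast
    simp_rw [mul_left_comm]
  have hc : (2 * Real.pi) ^ (-((n : ℝ) - 1) / 2) = Real.sqrt (2 * Real.pi) * c := by
    rw [Real.sqrt_eq_rpow, ← Real.rpow_add (by positivity)]
    ring_nf
  have hI : I ^ q * (-I) ^ q = 1 := by rw [← mul_pow, mul_neg, I_mul_I, neg_neg, one_pow]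
  rw [sum_ftr_mul_prod_eq_ftr_contractPow hf.integrable, ← hΦ, iterate_dirD_ftr,
    fourierIntegralExp_inner_pow_mul_eq_integral_orthogonal hξ hyξ
      (g := fun z => ((c * Φ z : ℝ) : ℂ)) (by fun_prop)
      ((c • Φ).integrable_pow_mul_norm_ofReal volume q), ftrTS, hc]
  simp_rw [hline, mul_left_comm _ (c : ℂ)]
  rw [integral_const_mul, mul_assoc _ (I ^ q), ← mul_assoc (I ^ q), hI, one_mul, ofReal_mul,
    mul_assoc]

/-- Fourier transform of the `q`-th momentum ray transform:
`(I^q f)^(y,ξ) = (2π)^{1/2} i^q ⟨ξ,∂_y⟩^q ⟨f̂(y), ξ^m⟩` for `(y,ξ) ∈ TSⁿ⁻¹`. -/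
theorem fourier_transform_of_momentum_ray_transform
    (n m q : ℕ)
    (f : (Fin m → Fin n) → En n → ℝ)
    (hf : IsSchwartzField f) (hfsym : IsSymField f) :
    ∀ y ξ : En n, ‖ξ‖ = 1 → ⟪y, ξ⟫ = 0 →
      ftrTS (momRT q f) y ξ
        = ((Real.sqrt (2 * Real.pi) : ℝ) : ℂ) * Complex.I ^ q *
          ((dirD ξ)^[q]
            (fun y' => ∑ i : Fin m → Fin n, ftr (f i) y' * ∏ r, (ξ (i r) : ℂ)) y) :=
  fourier_transform_of_momentum_ray_transform_general n m q f hf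
end
end

section
/- Let f ∈ 𝒮(S^m) be a symmetric m-tensor field on ℝⁿ with Schwartz components and let 0 ≤ q ≤ m. Then for all (x,ξ) ∈ ℝⁿ×(ℝⁿ∖{0}): (J^q f)(x,ξ) = |ξ|^{m−2q−1} Σ_{ℓ=0}^q (−1)^{q−ℓ} C(q,ℓ) |ξ|^ℓ ⟨ξ,x⟩^{q−ℓ} (I^ℓ f)(x − (⟨x,ξ⟩/|ξ|²)ξ, ξ/|ξ|). In particular the data (I^0 f,…,I^k f) and (J^0 f,…,J^k f) determine each other. -/
/-!
Write `ξ = ‖ξ‖ • η` with `‖η‖ = 1` and `x = x' + c • η` with `c = ⟪x, η⟫`, so that `x' ⊥ η`.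
The substitution `u = ‖ξ‖ t` shows that rescaling the direction by `‖ξ‖` multiplies `J^q`
by `‖ξ‖ ^ (m - q - 1)`. Moving the base point by `c` along the line turns the weight `t^q`
into `(u - c)^q`; its binomial expansion expresses `J^q f (x, η)` through the moments
`J^ℓ f (x', η) = I^ℓ f (x', η)`, `ℓ ≤ q`, which are integrable because `f` is Schwartz.
-/

noncomputable section

open MeasureTheory Filter
open scoped RealInnerProductSpace BigOperators

open Finset

section Line

variable {E F : Type*} [NormedAddCommGroup E] [NormedSpace ℝ E]
  [NormedAddCommGroup F] [NormedSpace ℝ F]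

lemma antilipschitzWith_add_smul_line (x : E) {η : E} (hη : η ≠ 0) :
    AntilipschitzWith ‖η‖₊⁻¹ (fun t : ℝ => x + t • η) := by
  refine AntilipschitzWith.of_le_mul_dist fun a b => ?_
  rw [dist_add_left, dist_eq_norm, dist_eq_norm, ← sub_smul, norm_smul, NNReal.coe_inv,
    coe_nnnorm, mul_comm, mul_inv_cancel_right₀ (norm_ne_zero_iff.mpr hη)]

lemma SchwartzMap.integrable_pow_smul_comp_line (φ : SchwartzMap E F) (x : E) {η : E}
    (hη : η ≠ 0) (k : ℕ) : Integrable (fun t : ℝ => t ^ k • φ (x + t • η)) := by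
  let ψ : SchwartzMap ℝ F := SchwartzMap.compCLMOfAntilipschitz ℝ (by fun_prop)
    (antilipschitzWith_add_smul_line x hη) φ
  refine (ψ.integrable_pow_mul volume k).mono' (by fun_prop) (.of_forall fun t => ?_)
  rw [norm_smul, norm_pow]
  rfl

end Line

section MomentRayTransform

variable {n m : ℕ} {f : (Fin m → Fin n) → En n → ℝ}

lemma prod_smul_apply (a : ℝ) (η : En n) (i : Fin m → Fin n) :
    ∏ r, (a • η) (i r) = a ^ m * ∏ r, η (i r) := by
  simp [prod_mul_distrib]

lemma integrable_momRT_integrand (hf : IsSchwartzField f) (q : ℕ) (x : En n) {η : En n}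
    (hη : η ≠ 0) :
    Integrable (fun t : ℝ => t ^ q * ∑ i : Fin m → Fin n, f i (x + t • η) * ∏ r, η (i r)) := by
  simp_rw [mul_sum, ← mul_assoc]
  refine integrable_finsetSum _ fun i _ => ?_
  obtain ⟨φ, hφ⟩ := hf i
  simpa only [← hφ, smul_eq_mul] using
    (φ.integrable_pow_smul_comp_line x hη q).mul_const (∏ r, η (i r))

lemma momRT_smul_of_pos (q : ℕ) (f : (Fin m → Fin n) → En n → ℝ) (x η : En n) {a : ℝ}
    (ha : 0 < a) : momRT q f x (a • η) = a ^ ((m : ℤ) - q - 1) * momRT q f x η := by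
  have ha₀ : a ≠ 0 := ha.ne'
  let g : ℝ → ℝ := fun u => (a⁻¹ ^ q * a ^ m) *
    (u ^ q * ∑ i : Fin m → Fin n, f i (x + u • η) * ∏ r, η (i r))
  have hg : ∀ t : ℝ, t ^ q * ∑ i : Fin m → Fin n, f i (x + t • a • η) * ∏ r, (a • η) (i r)
      = g (a * t) := by
    intro t
    simp only [g, prod_smul_apply, smul_smul, mul_comm t a, mul_pow, inv_pow, mul_sum]
    refine sum_congr rfl fun i _ => ?_
    field_simp
  have hpow : a ^ ((m : ℤ) - q - 1) = |a⁻¹| * (a⁻¹ ^ q * a ^ m) := by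
    rw [abs_of_pos (inv_pos.mpr ha), zpow_sub₀ ha₀, zpow_sub₀ ha₀, zpow_one, zpow_natCast,
      zpow_natCast, inv_pow]
    field_simp
  unfold momRT
  simp_rw [hg]
  rw [Measure.integral_comp_mul_left g a, smul_eq_mul, integral_const_mul, hpow]
  ring

lemma momRT_add_smul (hf : IsSchwartzField f) (q : ℕ) (x : En n) {η : En n} (hη : η ≠ 0)
    (c : ℝ) : momRT q f (x + c • η) η
      = ∑ ℓ ∈ range (q + 1), (q.choose ℓ : ℝ) * (-c) ^ (q - ℓ) * momRT ℓ f x η := by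
  let g : ℝ → ℝ := fun u => ∑ i : Fin m → Fin n, f i (x + u • η) * ∏ r, η (i r)
  have hshift : momRT q f (x + c • η) η = ∫ u : ℝ, (u + -c) ^ q * g u := by
    rw [← integral_add_right_eq_self _ c]
    simp only [momRT, g, add_neg_cancel_right, add_smul, ← add_assoc, add_right_comm x (c • η)]
  have hexpand : ∀ u : ℝ, (u + -c) ^ q * g u
      = ∑ ℓ ∈ range (q + 1), (q.choose ℓ : ℝ) * (-c) ^ (q - ℓ) * (u ^ ℓ * g u) := by
    intro u
    rw [add_pow, sum_mul]
    exact sum_congr rfl fun ℓ _ => by ring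
  simp_rw [hshift, hexpand]
  rw [integral_finsetSum _ fun ℓ _ => (integrable_momRT_integrand hf ℓ x hη).const_mul _]
  simp only [integral_const_mul, momRT]

end MomentRayTransform

theorem momRT_extension_formula_general
    (n m q : ℕ)
    (f : (Fin m → Fin n) → En n → ℝ)
    (hf : IsSchwartzField f) :
    ∀ x ξ : En n, ξ ≠ 0 →
      momRT q f x ξ
        = ‖ξ‖ ^ ((m : ℤ) - 2 * q - 1) *
          ∑ ℓ ∈ Finset.range (q + 1),
            (-1 : ℝ) ^ (q - ℓ) * (q.choose ℓ) * ‖ξ‖ ^ ℓ * (⟪ξ, x⟫ : ℝ) ^ (q - ℓ) *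
              momRT ℓ f (x - ((⟪x, ξ⟫ : ℝ) / ‖ξ‖ ^ 2) • ξ) (‖ξ‖⁻¹ • ξ) := by
  intro x ξ hξ
  rw [real_inner_comm x ξ]
  set s := ‖ξ‖
  set p := ⟪x, ξ⟫
  set x' := x - (p / s ^ 2) • ξ
  set η := s⁻¹ • ξ
  have hs : 0 < s := norm_pos_iff.mpr hξ
  have hη : η ≠ 0 := smul_ne_zero (inv_ne_zero hs.ne') hξ
  have hξη : ξ = s • η := (smul_inv_smul₀ hs.ne' ξ).symm
  have hxη : x = x' + (p / s) • η := by
    rw [smul_smul, show p / s * s⁻¹ = p / s ^ 2 by ring]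
    exact (sub_add_cancel x _).symm
  have hpow : ∀ ℓ ≤ q, s ^ ((m : ℤ) - q - 1) * (-(p / s)) ^ (q - ℓ)
      = s ^ ((m : ℤ) - 2 * q - 1) * ((-1) ^ (q - ℓ) * s ^ ℓ * p ^ (q - ℓ)) := by
    intro ℓ hℓ
    have hsplit : s ^ ((m : ℤ) - q - 1) = s ^ ((m : ℤ) - 2 * q - 1) * s ^ ℓ * s ^ (q - ℓ) := by
      rw [← zpow_natCast, ← zpow_natCast, ← zpow_add₀ hs.ne', ← zpow_add₀ hs.ne']
      push_cast [hℓ]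
      ring_nf
    rw [hsplit, neg_pow, div_pow]
    field_simp
  calc momRT q f x ξ = momRT q f (x' + (p / s) • η) (s • η) := by rw [← hxη, ← hξη]
    _ = s ^ ((m : ℤ) - q - 1) *
          ∑ ℓ ∈ range (q + 1), (q.choose ℓ : ℝ) * (-(p / s)) ^ (q - ℓ) * momRT ℓ f x' η := by
      rw [momRT_smul_of_pos _ _ _ _ hs, momRT_add_smul hf _ _ hη]
    _ = _ := by
      rw [mul_sum, mul_sum]
      refine sum_congr rfl fun ℓ hℓ => ?_
      linear_combination (q.choose ℓ : ℝ) * momRT ℓ f x' η * hpow ℓ (mem_range_succ_iff.mp hℓ)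

/-- the relation between the extended transform `J^q` and the
restricted transforms `I^ℓ` (values of `momRT` at points of `TSⁿ⁻¹`):
`(J^q f)(x,ξ) = |ξ|^{m−2q−1} Σ_{ℓ=0}^q (−1)^{q−ℓ} C(q,ℓ) |ξ|^ℓ ⟨ξ,x⟩^{q−ℓ}
(I^ℓ f)(x − (⟨x,ξ⟩/|ξ|²)ξ, ξ/|ξ|)`.  (The point
`(x − (⟨x,ξ⟩/|ξ|²)ξ, ξ/|ξ|)` lies on `TSⁿ⁻¹`, so the right-hand side uses only
the data `I^0 f, …, I^q f`; hence `(I^ℓ f)_{ℓ≤k}` and `(J^ℓ f)_{ℓ≤k}` are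
equivalent data.) -/
theorem momRT_extension_formula
    (n m q : ℕ) (hq : q ≤ m)
    (f : (Fin m → Fin n) → En n → ℝ)
    (hf : IsSchwartzField f) (hfsym : IsSymField f) :
    ∀ x ξ : En n, ξ ≠ 0 →
      momRT q f x ξ
        = ‖ξ‖ ^ ((m : ℤ) - 2 * q - 1) *
          ∑ ℓ ∈ Finset.range (q + 1),
            (-1 : ℝ) ^ (q - ℓ) * (q.choose ℓ) * ‖ξ‖ ^ ℓ * (⟪ξ, x⟫ : ℝ) ^ (q - ℓ) *
              momRT ℓ f (x - ((⟪x, ξ⟫ : ℝ) / ‖ξ‖ ^ 2) • ξ) (‖ξ‖⁻¹ • ξ) :=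
  momRT_extension_formula_general n m q f hf
end
end

section
/- Let g ∈ 𝒮(S^{m−s}) be a symmetric (m−s)-tensor field on ℝⁿ with Schwartz components, where 0 ≤ s ≤ m. Then for every integer ℓ ≥ 0 the momentum ray transforms of the m-tensor field d^s g satisfy: I^ℓ(d^s g) = (−1)^s C(ℓ,s) s! I^{ℓ−s} g if s ≤ ℓ, and I^ℓ(d^s g) = 0 if s > ℓ. In particular I^ℓ(d u) = −ℓ I^{ℓ−1} u and I^0(d u) = 0 for u ∈ 𝒮(S^{m−1}). -/
noncomputable section

open MeasureTheory Filter
open scoped RealInnerProductSpace BigOperators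

/-!
Along the ray `t ↦ x + t ξ`, contracting `d u` with `ξ^{⊗(m+1)}` gives the `t`-derivative of the
contraction of `u` with `ξ^{⊗m}`: symmetrization is invisible after contraction with a symmetric
tensor, and `Σ_j ∂_j u · ξ^j` is the directional derivative along `ξ`. Integrating by parts against
`t^ℓ` yields `I^ℓ(d u) = -ℓ I^{ℓ-1} u`, and iterating gives
`I^ℓ(d^s g) = (-1)^s ℓ(ℓ-1)⋯(ℓ-s+1) I^{ℓ-s} g`; the falling factorial equals `C(ℓ,s) s!` and
vanishes for `s > ℓ`.
-/

open SchwartzMap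

lemma antilipschitzWith_line {E : Type*} [NormedAddCommGroup E] [NormedSpace ℝ E]
    (x : E) {ξ : E} (hξ : ξ ≠ 0) : AntilipschitzWith ‖ξ‖₊⁻¹ (fun t : ℝ => x + t • ξ) := by
  refine AntilipschitzWith.of_le_mul_dist fun t s => ?_
  have hpos : 0 < ‖ξ‖ := norm_pos_iff.mpr hξ
  simp only [dist_eq_norm, add_sub_add_left_eq_sub, ← sub_smul, norm_smul, NNReal.coe_inv,
    coe_nnnorm]
  field_simp
  exact le_rfl

lemma integrable_pow_mul_schwartzMap (q : ℕ) (Ψ : 𝓢(ℝ, ℝ)) :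
    Integrable (fun t : ℝ => t ^ q * Ψ t) :=
  (Ψ.integrable_pow_mul volume q).mono (by fun_prop)
    (ae_of_all _ fun t => by simp)

lemma integral_pow_mul_deriv_schwartzMap (ℓ : ℕ) (Ψ : 𝓢(ℝ, ℝ)) :
    ∫ t, t ^ ℓ * deriv Ψ t = -ℓ * ∫ t, t ^ (ℓ - 1) * Ψ t := by
  have hderiv := integrable_pow_mul_schwartzMap ℓ (derivCLM ℝ ℝ Ψ)
  simp only [derivCLM_apply] at hderiv
  have hibp := integral_mul_deriv_eq_deriv_mul_of_integrable
    (u := fun t : ℝ => t ^ ℓ) (u' := fun t => ℓ * t ^ (ℓ - 1)) (v := Ψ) (v' := deriv Ψ)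
    (fun t _ => hasDerivAt_pow ℓ t) (fun t _ => Ψ.hasDerivAt t) hderiv
    (by simpa [Pi.mul_def, mul_assoc] using
      (integrable_pow_mul_schwartzMap (ℓ - 1) Ψ).const_mul (ℓ : ℝ))
    (integrable_pow_mul_schwartzMap ℓ Ψ)
  simp only [hibp, mul_assoc, integral_const_mul, neg_mul]

def rayContraction {n m : ℕ} (u : (Fin m → Fin n) → En n → ℝ) (x ξ : En n) (t : ℝ) : ℝ :=
  ∑ i : Fin m → Fin n, u i (x + t • ξ) * ∏ r, ξ (i r)

lemma momRT_eq_integral_rayContraction {n m : ℕ} (q : ℕ) (u : (Fin m → Fin n) → En n → ℝ)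
    (x ξ : En n) : momRT q u x ξ = ∫ t, t ^ q * rayContraction u x ξ t :=
  rfl

lemma IsSchwartzField.exists_schwartzMap_rayContraction {n m : ℕ}
    {u : (Fin m → Fin n) → En n → ℝ} (hu : IsSchwartzField u) (x : En n) {ξ : En n}
    (hξ : ξ ≠ 0) : ∃ Ψ : 𝓢(ℝ, ℝ), ⇑Ψ = rayContraction u x ξ := by
  choose φ hφ using hu
  refine ⟨∑ i, (∏ r, ξ (i r)) •
    compCLMOfAntilipschitz ℝ (by fun_prop) (antilipschitzWith_line x hξ) (φ i), ?_⟩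
  ext t
  simp [rayContraction, hφ, mul_comm]

lemma IsSchwartzField.symz {n m : ℕ} {u : (Fin m → Fin n) → En n → ℝ}
    (hu : IsSchwartzField u) : IsSchwartzField (symz u) := by
  choose φ hφ using hu
  refine fun i => ⟨(m.factorial : ℝ)⁻¹ • ∑ π : Equiv.Perm (Fin m), φ (i ∘ π), ?_⟩
  ext y
  simp only [_root_.symz, smul_apply, sum_apply, hφ, Pi.smul_apply, Finset.sum_apply]

lemma IsSchwartzField.dsym {n m : ℕ} {u : (Fin m → Fin n) → En n → ℝ}
    (hu : IsSchwartzField u) : IsSchwartzField (dsym u) := by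
  choose φ hφ using hu
  refine IsSchwartzField.symz fun i => ⟨LineDeriv.lineDerivOp
    (EuclideanSpace.single (i (Fin.last m)) (1 : ℝ)) (φ fun s => i s.castSucc), ?_⟩
  ext y
  simp [pd, lineDerivOp_apply_eq_fderiv, hφ]

lemma IsSchwartzField.dpow {n p : ℕ} {g : (Fin p → Fin n) → En n → ℝ}
    (hg : IsSchwartzField g) (s : ℕ) : IsSchwartzField (dpow s g) := by
  induction s with
  | zero => exact hg
  | succ s ih => exact ih.dsym

lemma sum_symz_mul_prod {n M : ℕ} (H : (Fin M → Fin n) → ℝ) (w : Fin n → ℝ) :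
    ∑ i : Fin M → Fin n, symz H i * ∏ r, w (i r) = ∑ i : Fin M → Fin n, H i * ∏ r, w (i r) := by
  have hperm : ∀ π : Equiv.Perm (Fin M),
      ∑ i : Fin M → Fin n, H (i ∘ π) * ∏ r, w (i r) = ∑ i : Fin M → Fin n, H i * ∏ r, w (i r) :=
    fun π => Fintype.sum_equiv (π.arrowCongr (Equiv.refl _)).symm _ _ fun i => by
      simp [Equiv.arrowCongr, Function.comp_def, ← Equiv.prod_comp π fun r => w (i r)]
  simp only [symz, smul_eq_mul, mul_assoc, Finset.sum_mul, ← Finset.mul_sum]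
  rw [Finset.sum_comm, Finset.sum_congr rfl fun π _ => hperm π, Finset.sum_const,
    Finset.card_univ, Fintype.card_perm, Fintype.card_fin, nsmul_eq_mul, ← mul_assoc,
    inv_mul_cancel₀ (by positivity), one_mul]

lemma EuclideanSpace.map_eq_sum_single {n : ℕ} (L : En n →L[ℝ] ℝ) (ξ : En n) :
    L ξ = ∑ a : Fin n, L (EuclideanSpace.single a 1) * ξ a := by
  conv_lhs => rw [← (EuclideanSpace.basisFun (Fin n) ℝ).sum_repr ξ]
  simp [mul_comm]

lemma sum_dsym_mul_prod {n m : ℕ} (u : (Fin m → Fin n) → En n → ℝ) (y ξ : En n) :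
    ∑ i : Fin (m + 1) → Fin n, dsym u i y * ∏ r, ξ (i r)
      = ∑ i : Fin m → Fin n, fderiv ℝ (u i) y ξ * ∏ r, ξ (i r) := by
  have hsymz : ∀ i, dsym u i y = symz (fun j : Fin (m + 1) → Fin n =>
      pd (j (Fin.last m)) (u fun s => j s.castSucc) y) i := by
    simp [dsym, symz, Finset.sum_apply]
  simp only [hsymz, sum_symz_mul_prod]
  rw [← (Fin.snocEquiv fun _ => Fin n).sum_comp, Fintype.sum_prod_type, Finset.sum_comm]
  refine Finset.sum_congr rfl fun i _ => ?_
  simp only [pd, Fin.snocEquiv_apply, Fin.snoc_castSucc, Fin.snoc_last, Fin.prod_univ_castSucc,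
    EuclideanSpace.map_eq_sum_single (fderiv ℝ (u i) y) ξ, Finset.sum_mul]
  exact Finset.sum_congr rfl fun a _ => by ring

lemma hasDerivAt_rayContraction {n m : ℕ} {u : (Fin m → Fin n) → En n → ℝ}
    (hu : ∀ i, Differentiable ℝ (u i)) (x ξ : En n) (t : ℝ) :
    HasDerivAt (rayContraction u x ξ) (rayContraction (dsym u) x ξ t) t := by
  have hline : HasDerivAt (fun s : ℝ => x + s • ξ) ξ t := by
    simpa using ((hasDerivAt_id t).smul_const ξ).const_add x
  rw [rayContraction, sum_dsym_mul_prod]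
  exact HasDerivAt.fun_sum fun i _ =>
    ((hu i).differentiableAt.hasFDerivAt.comp_hasDerivAt t hline).mul_const _

lemma momRT_dsym {n m : ℕ} (ℓ : ℕ) {u : (Fin m → Fin n) → En n → ℝ}
    (hu : IsSchwartzField u) (x : En n) {ξ : En n} (hξ : ξ ≠ 0) :
    momRT ℓ (dsym u) x ξ = -ℓ * momRT (ℓ - 1) u x ξ := by
  obtain ⟨Ψ, hΨ⟩ := hu.exists_schwartzMap_rayContraction x hξ
  have hdiff : ∀ i, Differentiable ℝ (u i) := fun i => by
    obtain ⟨φ, hφ⟩ := hu i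
    exact hφ ▸ φ.differentiable
  have hderiv : rayContraction (dsym u) x ξ = deriv Ψ := by
    ext t
    rw [hΨ, (hasDerivAt_rayContraction hdiff x ξ t).deriv]
  rw [momRT_eq_integral_rayContraction, momRT_eq_integral_rayContraction, hderiv, ← hΨ]
  exact integral_pow_mul_deriv_schwartzMap ℓ Ψ

lemma momRT_dpow {n p : ℕ} (s ℓ : ℕ) {g : (Fin p → Fin n) → En n → ℝ}
    (hg : IsSchwartzField g) (x : En n) {ξ : En n} (hξ : ξ ≠ 0) :
    momRT ℓ (dpow s g) x ξ = (-1) ^ s * ℓ.descFactorial s * momRT (ℓ - s) g x ξ := by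
  induction s generalizing ℓ with
  | zero => simp [dpow]
  | succ s ih =>
    rw [dpow, momRT_dsym ℓ (hg.dpow s) x hξ, ih]
    cases ℓ with
    | zero => simp
    | succ k =>
      simp only [Nat.succ_descFactorial_succ, Nat.add_sub_add_right, add_tsub_cancel_right]
      push_cast
      ring

theorem momRT_of_potential_field_general
    (n p s ℓ : ℕ)
    (g : (Fin p → Fin n) → En n → ℝ)
    (hg : IsSchwartzField g) :
    ∀ x ξ : En n, ‖ξ‖ = 1 → ⟪x, ξ⟫ = 0 →
      momRT ℓ (dpow s g) x ξ
        = if s ≤ ℓ then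
            (-1 : ℝ) ^ s * (ℓ.choose s) * (s.factorial) * momRT (ℓ - s) g x ξ
          else 0 := by
  intro x ξ hξ _
  rw [momRT_dpow s ℓ hg x (norm_ne_zero_iff.mp (hξ ▸ one_ne_zero))]
  split_ifs with hsℓ
  · rw [Nat.descFactorial_eq_factorial_mul_choose]
    push_cast
    ring
  · rw [Nat.descFactorial_eq_zero_iff_lt.mpr (not_le.mp hsℓ)]
    simp

/-- momentum ray transforms of potential-type fields:
for `g ∈ 𝒮(S^{m−s})` (here of rank `p = m − s`, so `d^s g` has rank `m = p + s`),
`I^ℓ(d^s g) = (−1)^s C(ℓ,s) s! I^{ℓ−s} g` if `s ≤ ℓ` and `= 0` if `s > ℓ`,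
at every point of `TSⁿ⁻¹`.  (The case `s = 1` gives `I^ℓ(d u) = −ℓ I^{ℓ−1} u`
and `I^0(d u) = 0`.) -/
theorem momRT_of_potential_field
    (n p s ℓ : ℕ)
    (g : (Fin p → Fin n) → En n → ℝ)
    (hg : IsSchwartzField g) (hgsym : IsSymField g) :
    ∀ x ξ : En n, ‖ξ‖ = 1 → ⟪x, ξ⟫ = 0 →
      momRT ℓ (dpow s g) x ξ
        = if s ≤ ℓ then
            (-1 : ℝ) ^ s * (ℓ.choose s) * (s.factorial) * momRT (ℓ - s) g x ξ
          else 0 :=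
  momRT_of_potential_field_general n p s ℓ g hg
end
end

section
/- Let n ≥ 2, let y ∈ ℝⁿ be a nonzero vector, and let F be a symmetric m-tensor on ℝⁿ. If ⟨F, y^{⊗r} ⊗ ξ^{⊗(m−r)}⟩ = 0 for every 0 ≤ r ≤ m and every ξ ∈ ℝⁿ with ⟨y,ξ⟩ = 0, then F = 0. (Here ⟨F, w₁⊗⋯⊗w_m⟩ = F_{i₁…i_m} w₁^{i₁}⋯w_m^{i_m}, summation over repeated indices.) -/
noncomputable section

open MeasureTheory Filter
open scoped RealInnerProductSpace BigOperators

/-!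
Write each `v` as `c • y + ξ` with `ξ ⊥ y`. Expanding `F(v, …, v)` multilinearly, every term is a
multiple of `F` evaluated on `y` in some slots and `ξ` in the others, which by symmetry is
`⟨F, y^{⊗r} ⊗ ξ^{⊗(m−r)}⟩ = 0`; so the form of `F` vanishes on the diagonal. Polarization
(inclusion–exclusion over the subsets of slots) recovers `m! F(w₁, …, wₘ)` from diagonal values,
and taking the `wₛ` to be basis vectors gives `m! F_{i₁…iₘ} = 0`.
-/

open Finset

theorem Finset.sum_neg_one_pow_card_compl_of_subset {ι : Type*} [Fintype ι] [DecidableEq ι]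
    (T : Finset ι) :
    ∑ S : Finset ι, (if T ⊆ S then (-1 : ℤ) ^ #Sᶜ else 0) = if T = univ then 1 else 0 := by
  rw [← sum_filter]
  calc ∑ S ∈ univ.filter (T ⊆ ·), (-1 : ℤ) ^ #Sᶜ = ∑ U ∈ Tᶜ.powerset, (-1 : ℤ) ^ #U :=
        sum_nbij' compl compl (by simp) (by simp [subset_compl_comm]) (by simp) (by simp)
          (by simp)
    _ = if T = univ then 1 else 0 := by
        simp only [sum_powerset_neg_one_pow_card, compl_eq_empty_iff]

theorem Fintype.sum_ite_surjective_eq_sum_perm {ι N : Type*} [Fintype ι] [DecidableEq ι]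
    [AddCommMonoid N] (φ : (ι → ι) → N) :
    ∑ g, (if Function.Surjective g then φ g else 0) = ∑ σ : Equiv.Perm ι, φ σ := by
  rw [← sum_filter]
  exact (sum_bij (fun (σ : Equiv.Perm ι) _ => ⇑σ) (by simp [Equiv.surjective])
    (fun _ _ _ _ h => DFunLike.coe_injective h)
    (fun g hg => ⟨.ofBijective g (mem_filter.1 hg).2.bijective_of_finite, by simp⟩)
    (by simp)).symm

theorem Fin.exists_perm_mem_iff_lt_card {m : ℕ} (S : Finset (Fin m)) :
    ∃ σ : Equiv.Perm (Fin m), ∀ s, σ s ∈ S ↔ (s : ℕ) < #S := by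
  have hcard : Fintype.card {s : Fin m // (s : ℕ) < #S} = Fintype.card S := by
    rw [Fintype.card_subtype, Fin.card_filter_val_lt, Fintype.card_coe,
      min_eq_right (by simpa using S.card_le_univ)]
  refine ⟨(Fintype.equivOfCardEq hcard).extendSubtype, fun s => ?_⟩
  by_cases hs : (s : ℕ) < #S
  · exact iff_of_true (Equiv.extendSubtype_mem _ s hs) hs
  · exact iff_of_false (Equiv.extendSubtype_not_mem _ s hs) hs

namespace MultilinearMap

variable {R M N ι : Type*} [CommSemiring R] [AddCommMonoid M] [Module R M] [Fintype ι]
  [DecidableEq ι]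

section AddCommGroup

variable [AddCommGroup N] [Module R N]

/-- The polarization identity. -/
theorem sum_neg_one_pow_smul_map_sum_eq_sum_perm (f : MultilinearMap R (fun _ : ι => M) N)
    (v : ι → M) :
    ∑ S : Finset ι, (-1 : ℤ) ^ #Sᶜ • f (fun _ => ∑ k ∈ S, v k) = ∑ σ : Equiv.Perm ι, f (v ∘ σ) :=
  calc ∑ S : Finset ι, (-1 : ℤ) ^ #Sᶜ • f (fun _ => ∑ k ∈ S, v k)
      = ∑ S : Finset ι, ∑ g : ι → ι,
          (if univ.image g ⊆ S then (-1 : ℤ) ^ #Sᶜ else 0) • f (v ∘ g) := by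
        refine sum_congr rfl fun S _ => ?_
        simp_rw [ite_smul, zero_smul, ← sum_filter, f.map_sum_finset, ← smul_sum]
        congr 2
        ext g
        simp [image_subset_iff]
    _ = ∑ g : ι → ι, (if Function.Surjective g then f (v ∘ g) else 0) := by
        rw [sum_comm]
        refine sum_congr rfl fun g _ => ?_
        rw [← sum_smul, sum_neg_one_pow_card_compl_of_subset]
        have : univ.image g = univ ↔ Function.Surjective g := by
          simp [eq_univ_iff_forall, Function.Surjective]
        split_ifs <;> simp_all
    _ = ∑ σ : Equiv.Perm ι, f (v ∘ σ) := Fintype.sum_ite_surjective_eq_sum_perm _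

theorem eq_zero_of_map_const_eq_zero [IsAddTorsionFree N]
    {f : MultilinearMap R (fun _ : ι => M) N} (hf : ∀ (σ : Equiv.Perm ι) v, f (v ∘ σ) = f v)
    (h : ∀ x, f (fun _ => x) = 0) : f = 0 := by
  ext v
  have := f.sum_neg_one_pow_smul_map_sum_eq_sum_perm v
  simp only [h, smul_zero, sum_const_zero, hf, sum_const, card_univ, Fintype.card_perm] at this
  simpa [Nat.factorial_ne_zero] using this.symm

end AddCommGroup

theorem map_smul_add_const [AddCommMonoid N] [Module R N]
    (f : MultilinearMap R (fun _ : ι => M) N) (c : R) (x y : M) :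
    f (fun _ => c • x + y) = ∑ S : Finset ι, c ^ #S • f (S.piecewise (fun _ => x) fun _ => y) := by
  have hpiece (S : Finset ι) : S.piecewise (fun _ => c • x) (fun _ => y) =
      S.piecewise (fun i => c • S.piecewise (fun _ => x) (fun _ => y) i)
        (S.piecewise (fun _ => x) fun _ => y) := by
    ext i
    by_cases hi : i ∈ S <;> simp [hi]
  simp_rw [← Pi.add_def, f.map_add_univ, hpiece, f.map_piecewise_smul, prod_const]

end MultilinearMap

section TensorForm

variable {ι κ : Type*} [Fintype ι] [DecidableEq ι] [Fintype κ]

/-- `tensorForm F w = ⟨F, w₁ ⊗ ⋯ ⊗ wₘ⟩`. -/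
def tensorForm (F : (ι → κ) → ℝ) : MultilinearMap ℝ (fun _ : ι => EuclideanSpace ℝ κ) ℝ :=
  ∑ i, F i • (MultilinearMap.mkPiAlgebra ℝ ι ℝ).compLinearMap
    fun s => (EuclideanSpace.proj (i s) : EuclideanSpace ℝ κ →L[ℝ] ℝ).toLinearMap

theorem tensorForm_apply (F : (ι → κ) → ℝ) (w : ι → EuclideanSpace ℝ κ) :
    tensorForm F w = ∑ i, F i * ∏ s, w s (i s) := by
  simp [tensorForm]

theorem tensorForm_single [DecidableEq κ] (F : (ι → κ) → ℝ) (i : ι → κ) :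
    tensorForm F (fun s => EuclideanSpace.single (i s) 1) = F i := by
  simp [tensorForm_apply, prod_boole, ← funext_iff]

theorem tensorForm_comp_perm {F : (ι → κ) → ℝ} (hF : ∀ (σ : Equiv.Perm ι) i, F (i ∘ σ) = F i)
    (σ : Equiv.Perm ι) (w : ι → EuclideanSpace ℝ κ) : tensorForm F (w ∘ σ) = tensorForm F w := by
  simp only [tensorForm_apply]
  calc ∑ i, F i * ∏ s, (w ∘ σ) s (i s)
      = ∑ j, F (j ∘ σ) * ∏ s, w (σ s) (j (σ s)) :=
        (Fintype.sum_equiv (σ.symm.arrowCongr (Equiv.refl κ)) _ _ fun j => rfl).symm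
    _ = ∑ j, F j * ∏ s, w s (j s) := by
        refine sum_congr rfl fun j _ => ?_
        rw [hF, Equiv.prod_comp σ fun s => w s (j s)]

end TensorForm

theorem tensorForm_piecewise_eq {n m : ℕ} {F : (Fin m → Fin n) → ℝ} (hF : IsSymTensor F)
    (S : Finset (Fin m)) (y ξ : En n) :
    tensorForm F (S.piecewise (fun _ => y) fun _ => ξ) =
      tensorForm F (fun s => if (s : ℕ) < #S then y else ξ) := by
  obtain ⟨σ, hσ⟩ := Fin.exists_perm_mem_iff_lt_card S
  rw [← tensorForm_comp_perm hF σ]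
  congr 1
  ext1 s
  simp [Finset.piecewise, hσ]

theorem tensorForm_const_eq_zero {n m : ℕ} {F : (Fin m → Fin n) → ℝ} (hF : IsSymTensor F)
    {y : En n} (hy : y ≠ 0)
    (h : ∀ r ≤ m, ∀ ξ : En n, ⟪y, ξ⟫ = 0 →
      tensorForm F (fun s => if (s : ℕ) < r then y else ξ) = 0)
    (v : En n) : tensorForm F (fun _ => v) = 0 := by
  -- `v = c • y + ξ` with `ξ ⊥ y`
  set c := ⟪y, v⟫ / ⟪y, y⟫
  have hξ : ⟪y, v - c • y⟫ = 0 := by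
    rw [inner_sub_right, real_inner_smul_right, div_mul_cancel₀ _ (inner_self_ne_zero.mpr hy),
      sub_self]
  rw [← add_sub_cancel (c • y) v, MultilinearMap.map_smul_add_const]
  refine sum_eq_zero fun S _ => ?_
  rw [tensorForm_piecewise_eq hF, h _ (by simpa using S.card_le_univ) _ hξ, smul_zero]

theorem symmetric_tensor_vanishing_criterion_general
    (n m : ℕ) (y : En n) (hy : y ≠ 0)
    (F : (Fin m → Fin n) → ℝ) (hF : IsSymTensor F)
    (h : ∀ r, r ≤ m → ∀ ξ : En n, ⟪y, ξ⟫ = 0 →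
      ∑ i : Fin m → Fin n,
        F i * ∏ s : Fin m, (if (s : ℕ) < r then y (i s) else ξ (i s)) = 0) :
    ∀ i, F i = 0 := by
  have hform : tensorForm F = 0 :=
    MultilinearMap.eq_zero_of_map_const_eq_zero (tensorForm_comp_perm hF)
      (tensorForm_const_eq_zero hF hy fun r hr ξ hξ => by
        simpa [tensorForm_apply, apply_ite, ite_apply] using h r hr ξ hξ)
  intro i
  rw [← tensorForm_single F i, hform]
  rfl

/-- a symmetric `m`-tensor `F` vanishes if it is annihilated by all
tensors `y^{⊗r} ⊗ ξ^{⊗(m−r)}` with `0 ≤ r ≤ m` and `ξ ⊥ y`, for a fixed `y ≠ 0`. -/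
theorem symmetric_tensor_vanishing_criterion
    (n m : ℕ) (hn : 2 ≤ n) (y : En n) (hy : y ≠ 0)
    (F : (Fin m → Fin n) → ℝ) (hF : IsSymTensor F)
    (h : ∀ r, r ≤ m → ∀ ξ : En n, ⟪y, ξ⟫ = 0 →
      ∑ i : Fin m → Fin n,
        F i * ∏ s : Fin m, (if (s : ℕ) < r then y (i s) else ξ (i s)) = 0) :
    ∀ i, F i = 0 :=
  symmetric_tensor_vanishing_criterion_general n m y hy F hF h
end
end

section
/- Let r ≥ 0 and let h ∈ 𝒮(S^r) be a symmetric r-tensor field on ℝⁿ with Schwartz components. Then for all indices 1 ≤ i₁,j₁,…,i_{r+1},j_{r+1} ≤ n the function J^0 h on ℝⁿ×(ℝⁿ∖{0}) satisfies J_{i_{r+1}j_{r+1}} ⋯ J_{i₂j₂} J_{i₁j₁} (J^0 h) = 0, where J_{ij} = ∂²/∂x^i∂ξ^j − ∂²/∂x^j∂ξ^i. -/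
noncomputable section

open MeasureTheory Filter
open scoped RealInnerProductSpace BigOperators

/-!
Write `I g (x, ξ) = ∫ g(x + tξ) dt`. On `ξ ≠ 0`, `J⁰h = ∑ᵢ ξ^{i₁}⋯ξ^{i_r} I hᵢ`, a sum of
terms `p(ξ) I g` with `p` homogeneous of degree `r` and `g` Schwartz. Differentiating under the
integral, `∂_{ξʲ} (p I g) = (∂ⱼp) I g + p I¹(∂ⱼg)` with `I¹` the `t`-weighted integral, and then
`∂_{xⁱ}` falls on `g`. In `J_{ij}` the second-order terms `p I¹(∂ᵢ∂ⱼg)` cancel by symmetry of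
second derivatives, leaving `J_{ij}(p I g) = (∂ⱼp) I(∂ᵢg) - (∂ᵢp) I(∂ⱼg)`: each John operator
lowers the degree of the polynomial coefficients by one, so `r + 1` of them give zero.
-/

open LineDeriv
open scoped SchwartzMap

namespace SchwartzMap

variable {E V : Type*} [NormedAddCommGroup E] [NormedSpace ℝ E]
  [NormedAddCommGroup V] [NormedSpace ℝ V]

theorem exists_bound_along_lines (f : 𝓢(E, V)) (k : ℕ) (R : ℝ) {a : ℝ} (ha : 0 < a) :
    ∃ K, ∀ (t : ℝ) (x ξ : E), ‖x‖ ≤ R → a ≤ ‖ξ‖ →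
      (1 + |t|) ^ k * ‖f (x + t • ξ)‖ ≤ K * (1 + t ^ 2)⁻¹ := by
  obtain ⟨M, hM⟩ : ∃ M, ∀ y, (1 + ‖y‖) ^ (k + 2) * ‖f y‖ ≤ M :=
    ⟨_, fun y => by
      simpa using one_add_le_sup_seminorm_apply (𝕜 := ℝ) (m := (k + 2, 0)) le_rfl le_rfl f y⟩
  set b := min a 1
  have hb : 0 < b := lt_min ha one_pos
  set C := (1 + |R|) / b
  refine ⟨C ^ (k + 2) * M, fun t x ξ hx hξ => ?_⟩
  set y := x + t • ξ
  -- `a |t| ≤ ‖t ξ‖ ≤ ‖y‖ + ‖x‖`: along the line, decay in `y` is decay in `t`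
  have hty : 1 + |t| ≤ C * (1 + ‖y‖) := by
    have hline : a * |t| ≤ ‖y‖ + R := by
      have := norm_sub_le y x
      rw [show y - x = t • ξ by simp [y], norm_smul, Real.norm_eq_abs] at this
      nlinarith [abs_nonneg t]
    rw [div_mul_eq_mul_div, le_div_iff₀ hb]
    nlinarith [min_le_left a 1, min_le_right a 1, abs_nonneg t, le_abs_self R, norm_nonneg y,
      mul_nonneg (abs_nonneg R) (norm_nonneg y)]
  have hsq : 1 + t ^ 2 ≤ (1 + |t|) ^ 2 := by nlinarith [abs_nonneg t, sq_abs t]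
  rw [le_mul_inv_iff₀ (by positivity)]
  calc (1 + |t|) ^ k * ‖f y‖ * (1 + t ^ 2)
      ≤ (1 + |t|) ^ (k + 2) * ‖f y‖ := by
        rw [pow_add, mul_right_comm]; gcongr
    _ ≤ (C * (1 + ‖y‖)) ^ (k + 2) * ‖f y‖ := by gcongr
    _ ≤ C ^ (k + 2) * M := by rw [mul_pow, mul_assoc]; gcongr; exact hM y

theorem integrable_pow_smul_comp_line_s17 (f : 𝓢(E, V)) (q : ℕ) (x : E) {ξ : E} (hξ : ξ ≠ 0) :
    Integrable fun t : ℝ => t ^ q • f (x + t • ξ) := by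
  obtain ⟨K, hK⟩ := f.exists_bound_along_lines q ‖x‖ (norm_pos_iff.mpr hξ)
  refine (integrable_inv_one_add_sq.const_mul K).mono' (by fun_prop) (.of_forall fun t => ?_)
  rw [norm_smul, norm_pow, Real.norm_eq_abs]
  exact le_trans (by gcongr; linarith [abs_nonneg t]) (hK t x ξ le_rfl le_rfl)

theorem lineDerivOp_comm (f : 𝓢(E, V)) (v w : E) : ∂_{v} (∂_{w} f) = ∂_{w} (∂_{v} f) := by
  ext x
  have hD : DifferentiableAt ℝ (fderiv ℝ f) x := by
    simpa [← funext (fderivCLM_apply ℝ f)] using (fderivCLM ℝ E V f).differentiableAt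
  have hsymm := (f.smooth 2).contDiffAt (x := x) |>.isSymmSndFDerivAt (by simp) v w
  change fderiv ℝ (fun y => fderiv ℝ f y w) x v = fderiv ℝ (fun y => fderiv ℝ f y v) x w
  rw [fderiv_clm_apply hD (differentiableAt_const _), fderiv_clm_apply hD (differentiableAt_const _)]
  simpa using hsymm

end SchwartzMap

section RayIntegral

variable {E : Type*} [NormedAddCommGroup E] [NormedSpace ℝ E]

def rayInt (q : ℕ) (g : 𝓢(E, ℝ)) (x ξ : E) : ℝ :=
  ∫ t : ℝ, t ^ q * g (x + t • ξ)

theorem integral_pow_smul_fderiv_apply (q : ℕ) (g : 𝓢(E, ℝ)) (x : E) {ξ : E} (hξ : ξ ≠ 0)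
    (v : E) : (∫ t : ℝ, t ^ q • fderiv ℝ g (x + t • ξ)) v = rayInt q (∂_{v} g) x ξ := by
  simp_rw [← SchwartzMap.fderivCLM_apply ℝ]
  rw [ContinuousLinearMap.integral_apply
    ((SchwartzMap.fderivCLM ℝ E ℝ g).integrable_pow_smul_comp_line_s17 q x hξ)]
  rfl

theorem hasFDerivAt_rayInt_fst (q : ℕ) (g : 𝓢(E, ℝ)) (x : E) {ξ : E} (hξ : ξ ≠ 0) :
    HasFDerivAt (fun x' => rayInt q g x' ξ) (∫ t : ℝ, t ^ q • fderiv ℝ g (x + t • ξ)) x := by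
  obtain ⟨K, hK⟩ := (SchwartzMap.fderivCLM ℝ E ℝ g).exists_bound_along_lines q (‖x‖ + 1)
    (norm_pos_iff.mpr hξ)
  refine hasFDerivAt_integral_of_dominated_of_fderiv_le (𝕜 := ℝ)
    (F := fun x' t => t ^ q * g (x' + t • ξ))
    (F' := fun x' t => t ^ q • fderiv ℝ g (x' + t • ξ)) (Metric.ball_mem_nhds x one_pos)
    (.of_forall fun _ => by fun_prop) (by simpa using g.integrable_pow_smul_comp_line_s17 q x hξ)
    ?_ (.of_forall fun t x' hx' => ?_) (integrable_inv_one_add_sq.const_mul K)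
    (.of_forall fun t x' _ => ?_)
  · simp_rw [← SchwartzMap.fderivCLM_apply ℝ]; fun_prop
  · have hx'R : ‖x'‖ ≤ ‖x‖ + 1 := by
      linarith [norm_le_norm_add_norm_sub' x' x, mem_ball_iff_norm.mp hx']
    rw [norm_smul, norm_pow, Real.norm_eq_abs]
    refine le_trans ?_ (hK t x' ξ hx'R le_rfl)
    rw [SchwartzMap.fderivCLM_apply]
    gcongr; linarith [abs_nonneg t]
  · have := (g.hasFDerivAt (x' + t • ξ)).comp x' ((hasFDerivAt_id x').add_const (t • ξ))
    simpa using this.const_mul (t ^ q)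

theorem hasFDerivAt_rayInt_snd (q : ℕ) (g : 𝓢(E, ℝ)) (x : E) {ξ : E} (hξ : ξ ≠ 0) :
    HasFDerivAt (fun ξ' => rayInt q g x ξ') (∫ t : ℝ, t ^ (q + 1) • fderiv ℝ g (x + t • ξ)) ξ := by
  have hξ2 : 0 < ‖ξ‖ / 2 := by positivity
  obtain ⟨K, hK⟩ := (SchwartzMap.fderivCLM ℝ E ℝ g).exists_bound_along_lines (q + 1) ‖x‖ hξ2
  refine hasFDerivAt_integral_of_dominated_of_fderiv_le (𝕜 := ℝ)
    (F := fun ξ' t => t ^ q * g (x + t • ξ'))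
    (F' := fun ξ' t => t ^ (q + 1) • fderiv ℝ g (x + t • ξ')) (Metric.ball_mem_nhds ξ hξ2)
    (.of_forall fun _ => by fun_prop) (by simpa using g.integrable_pow_smul_comp_line_s17 q x hξ)
    ?_ (.of_forall fun t ξ' hξ' => ?_) (integrable_inv_one_add_sq.const_mul K)
    (.of_forall fun t ξ' _ => ?_)
  · simp_rw [← SchwartzMap.fderivCLM_apply ℝ]; fun_prop
  · have hξ' : ‖ξ‖ / 2 ≤ ‖ξ'‖ := by
      linarith [norm_le_norm_add_norm_sub' ξ ξ', mem_ball_iff_norm'.mp hξ']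
    rw [norm_smul, norm_pow, Real.norm_eq_abs]
    refine le_trans ?_ (hK t x ξ' le_rfl hξ')
    rw [SchwartzMap.fderivCLM_apply]
    gcongr; linarith [abs_nonneg t]
  · have := (g.hasFDerivAt (x + t • ξ')).comp ξ' (((hasFDerivAt_id ξ').const_smul t).const_add x)
    refine (this.const_mul (t ^ q)).congr_fderiv ?_
    ext v; simp [pow_succ]; ring

end RayIntegral

namespace MvPolynomial

theorem hasFDerivAt_eval_euclideanSpace {ι : Type*} [Fintype ι] (p : MvPolynomial ι ℝ)
    (ξ : EuclideanSpace ℝ ι) :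
    HasFDerivAt (fun ξ : EuclideanSpace ℝ ι => eval ξ p)
      (∑ j, eval ξ (pderiv j p) • EuclideanSpace.proj (𝕜 := ℝ) j) ξ := by
  classical
  induction p using MvPolynomial.induction_on with
  | C a => simpa using hasFDerivAt_const a ξ
  | add p q hp hq => simpa [Finset.sum_add_distrib, add_smul] using hp.fun_add hq
  | mul_X p i hp =>
    simp only [map_mul, eval_X]
    refine (hp.fun_mul (EuclideanSpace.proj (𝕜 := ℝ) i).hasFDerivAt).congr_fderiv ?_
    ext v
    simp [pderiv_X, Pi.single_apply, apply_ite (eval _), ite_mul, add_mul, Finset.sum_add_distrib,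
      Finset.mul_sum, mul_assoc]

end MvPolynomial

section JohnOperator

open MvPolynomial

variable {n : ℕ}

local notation "∂[" i "]" => LineDeriv.lineDerivOp (EuclideanSpace.single i (1 : ℝ))

theorem pdxi_congr {F G : En n → En n → ℝ} {x ξ : En n} (hξ : ξ ≠ 0)
    (hFG : ∀ ξ', ξ' ≠ 0 → F x ξ' = G x ξ') (j : Fin n) : pdxi j F x ξ = pdxi j G x ξ := by
  unfold pdxi
  rw [Filter.EventuallyEq.fderiv_eq (Filter.eventually_of_mem (isOpen_ne.mem_nhds hξ) hFG)]

theorem pdxi_sum_eval_mul_rayInt {ι : Type*} [Fintype ι] (q : ℕ) (p : ι → MvPolynomial (Fin n) ℝ)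
    (g : ι → 𝓢(En n, ℝ)) (j : Fin n) (x : En n) {ξ : En n} (hξ : ξ ≠ 0) :
    pdxi j (fun x ξ => ∑ k, eval ξ (p k) * rayInt q (g k) x ξ) x ξ =
      ∑ k, (eval ξ (pderiv j (p k)) * rayInt q (g k) x ξ +
        eval ξ (p k) * rayInt (q + 1) (∂[j] (g k)) x ξ) := by
  have hD := HasFDerivAt.fun_sum (u := Finset.univ) fun k _ =>
    ((p k).hasFDerivAt_eval_euclideanSpace ξ).fun_mul (hasFDerivAt_rayInt_snd q (g k) x hξ)
  rw [pdxi, hD.fderiv]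
  simp only [sum_apply, add_apply, smul_apply, integral_pow_smul_fderiv_apply _ _ _ hξ,
    smul_eq_mul, PiLp.proj_apply, PiLp.single_apply, mul_ite, mul_one, mul_zero,
    Finset.sum_ite_eq', Finset.mem_univ, ↓reduceIte]
  exact Finset.sum_congr rfl fun k _ => by ring

theorem johnOp_sum_eval_mul_rayInt {ι : Type*} [Fintype ι] {F : En n → En n → ℝ}
    (p : ι → MvPolynomial (Fin n) ℝ) (g : ι → 𝓢(En n, ℝ))
    (hF : ∀ x ξ, ξ ≠ 0 → F x ξ = ∑ k, eval ξ (p k) * rayInt 0 (g k) x ξ)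
    (i j : Fin n) (x : En n) {ξ : En n} (hξ : ξ ≠ 0) :
    johnOp i j F x ξ = ∑ k,
      (eval ξ (pderiv j (p k)) * rayInt 0 (∂[i] (g k)) x ξ -
        eval ξ (pderiv i (p k)) * rayInt 0 (∂[j] (g k)) x ξ) := by
  have hpdx : ∀ i j : Fin n, pdx i (pdxi j F) x ξ = ∑ k,
      (eval ξ (pderiv j (p k)) * rayInt 0 (∂[i] (g k)) x ξ +
        eval ξ (p k) * rayInt 1 (∂[i] (∂[j] (g k))) x ξ) := by
    intro i j
    have hpdxi : (fun x' => pdxi j F x' ξ) = fun x' => ∑ k,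
        (eval ξ (pderiv j (p k)) * rayInt 0 (g k) x' ξ +
          eval ξ (p k) * rayInt 1 (∂[j] (g k)) x' ξ) := by
      ext x'
      rw [pdxi_congr (G := fun x ξ => ∑ k, eval ξ (p k) * rayInt 0 (g k) x ξ) hξ (hF x'),
        pdxi_sum_eval_mul_rayInt 0 p g j x' hξ]
    have hD := HasFDerivAt.fun_sum (u := Finset.univ) fun k _ =>
      ((hasFDerivAt_rayInt_fst 0 (g k) x hξ).const_mul (eval ξ (pderiv j (p k)))).fun_add
        ((hasFDerivAt_rayInt_fst 1 (∂[j] (g k)) x hξ).const_mul (eval ξ (p k)))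
    rw [pdx, hpdxi, hD.fderiv]
    simp only [sum_apply, add_apply, smul_apply, integral_pow_smul_fderiv_apply _ _ _ hξ,
      smul_eq_mul]
  rw [johnOp, hpdx, hpdx, ← Finset.sum_sub_distrib]
  refine Finset.sum_congr rfl fun k _ => ?_
  rw [SchwartzMap.lineDerivOp_comm (g k)]
  ring

def IsRaySum (m : ℕ) (F : En n → En n → ℝ) : Prop :=
  ∃ (ι : Type) (_ : Fintype ι) (p : ι → MvPolynomial (Fin n) ℝ) (g : ι → 𝓢(En n, ℝ)),
    (∀ k, (p k).IsHomogeneous m) ∧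
      ∀ x ξ, ξ ≠ 0 → F x ξ = ∑ k, eval ξ (p k) * rayInt 0 (g k) x ξ

theorem isRaySum_johnOp {m : ℕ} {F : En n → En n → ℝ} (hF : IsRaySum (m + 1) F) (i j : Fin n) :
    IsRaySum m (johnOp i j F) := by
  obtain ⟨ι, _, p, g, hp, hFpg⟩ := hF
  refine ⟨ι ⊕ ι, inferInstance, Sum.elim (fun k => pderiv j (p k)) (fun k => -pderiv i (p k)),
    Sum.elim (fun k => ∂[i] (g k)) (fun k => ∂[j] (g k)), ?_, fun x ξ hξ => ?_⟩
  · rintro (k | k)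
    · exact (hp k).pderiv
    · exact (hp k).pderiv.neg
  · rw [johnOp_sum_eval_mul_rayInt p g hFpg i j x hξ, Fintype.sum_sum_type,
      ← Finset.sum_add_distrib]
    simp [sub_eq_add_neg]

theorem johnOp_eq_zero_of_isRaySum_zero {F : En n → En n → ℝ} (hF : IsRaySum 0 F) (i j : Fin n)
    (x : En n) {ξ : En n} (hξ : ξ ≠ 0) : johnOp i j F x ξ = 0 := by
  obtain ⟨ι, _, p, g, hp, hFpg⟩ := hF
  have hpderiv : ∀ k l, pderiv l (p k) = 0 := fun k l => by
    rw [totalDegree_eq_zero_iff_eq_C.mp ((totalDegree_zero_iff_isHomogeneous _).mpr (hp k)),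
      pderiv_C]
  simp [johnOp_sum_eval_mul_rayInt p g hFpg i j x hξ, hpderiv]

theorem isRaySum_johnIter (l : List (Fin n × Fin n)) {m : ℕ} {F : En n → En n → ℝ}
    (hF : IsRaySum (l.length + m) F) : IsRaySum m (johnIter l F) := by
  induction l generalizing m with
  | nil => simpa [johnIter] using hF
  | cons ij l ih =>
    refine isRaySum_johnOp (ih ?_) ij.1 ij.2
    rwa [List.length_cons, add_right_comm] at hF

theorem isRaySum_momRT {r : ℕ} {h : (Fin r → Fin n) → En n → ℝ} (hh : IsSchwartzField h) :
    IsRaySum r (momRT 0 h) := by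
  choose φ hφ using hh
  refine ⟨Fin r → Fin n, inferInstance, fun i => ∏ s, X (i s), φ, fun i => ?_, fun x ξ hξ => ?_⟩
  · simpa using IsHomogeneous.prod Finset.univ _ (fun _ => 1) fun s _ => isHomogeneous_X ℝ (i s)
  · have hint : ∀ i, Integrable fun t : ℝ => (∏ s, ξ (i s)) * (t ^ 0 * φ i (x + t • ξ)) :=
      fun i => by simpa using ((φ i).integrable_pow_smul_comp_line_s17 0 x hξ).const_mul _
    simp_rw [momRT, rayInt, ← hφ, map_prod, eval_X, ← integral_const_mul]
    rw [← integral_finsetSum _ fun i _ => hint i]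
    congr 1; ext t
    rw [Finset.mul_sum]
    exact Finset.sum_congr rfl fun i _ => by ring

end JohnOperator

theorem john_operators_annihilate_ray_transform_general
    (n r : ℕ)
    (h : (Fin r → Fin n) → En n → ℝ)
    (hh : IsSchwartzField h)
    (idx jdx : Fin (r + 1) → Fin n) :
    ∀ x ξ : En n, ξ ≠ 0 →
      johnIter ((List.finRange (r + 1)).map (fun s => (idx s, jdx s)))
        (momRT 0 h) x ξ = 0 := by
  intro x ξ hξ
  rw [List.finRange_succ, List.map_cons]
  refine johnOp_eq_zero_of_isRaySum_zero (isRaySum_johnIter _ ?_) _ _ x hξ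
  simpa using isRaySum_momRT hh

/-- the `(r+1)`-fold iterated John operators annihilate the ray
transform `J^0 h` of any Schwartz symmetric `r`-tensor field `h`. -/
theorem john_operators_annihilate_ray_transform
    (n r : ℕ)
    (h : (Fin r → Fin n) → En n → ℝ)
    (hh : IsSchwartzField h) (hhsym : IsSymField h)
    (idx jdx : Fin (r + 1) → Fin n) :
    ∀ x ξ : En n, ξ ≠ 0 →
      johnIter ((List.finRange (r + 1)).map (fun s => (idx s, jdx s)))
        (momRT 0 h) x ξ = 0 :=
  john_operators_annihilate_ray_transform_general n r h hh idx jdx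
end
end
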